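/- (Energy identity for the HDG deformation error equations, abstract version) Suppose bilinear forms satisfy the discrete error equations: (ε_σ, ψ) − (ε_V, div ψ) + ⟨ε_V̂, ψ n⟩ = −(I_σ, ψ), (ε_σ, ∇w) − ⟨ε_σ̂ n, w⟩ = 0 for all discrete ψ, w, with ε_σ̂ n = ε_σ n + τ(ε_V − ε_V̂), and boundary conditions ⟨ε_σ̂ n, μ⟩ = 0 on interior faces, ⟨ε_σ̂ n, μ⟩ = ⟨δG, μ⟩ on Γ_N, ⟨ε_V̂, μ⟩ = ⟨δg, μ⟩ on Γ_D. Then choosing ψ = ε_σ and w = ε_V and integrating by parts yields ‖ε_σ‖² + ‖τ^{1/2}(ε_V − ε_V̂)‖² + ⟨δg, ε_σ̂ n⟩_{Γ_D} + ⟨δG, ε_V̂⟩_{Γ_N} = −(I_σ, ε_σ). -/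

import Mathlib

/-!
Test the first error equation with `ε_σ` and the second with `ε_V`. Integration by parts turns
`(ε_V, div ε_σ)` into a face term, and the second equation turns the remaining volume term
`(ε_σ, ∇ε_V)` into `⟨ε_σ̂ n, ε_V⟩`; inserting `ε_σ n = ε_σ̂ n − τ (ε_V − ε_V̂)` leaves
`‖ε_σ‖² + τ ‖ε_V − ε_V̂‖² + ⟨ε_σ̂ n, ε_V̂⟩`. The last face pairing is split over interior,
Neumann and Dirichlet faces, where the face conditions replace one of its two factors by data.
-/

open RealInnerProductSpace

section

variable {Z W B : Type*}
  [NormedAddCommGroup Z] [InnerProductSpace ℝ Z]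
  [NormedAddCommGroup W] [InnerProductSpace ℝ W]
  [NormedAddCommGroup B] [InnerProductSpace ℝ B]

theorem inner_eq_of_face_conditions (PI PN PD : B →ₗ[ℝ] B)
    (hsplit : ∀ u v : B, ⟪u, v⟫ = ⟪PI u, v⟫ + ⟪PN u, v⟫ + ⟪PD u, v⟫)
    (hPDsym : ∀ u v : B, ⟪PD u, v⟫ = ⟪u, PD v⟫)
    {flux trace δG δg : B}
    (hI : ⟪PI flux, trace⟫ = 0)
    (hN : ⟪PN flux, trace⟫ = ⟪PN δG, trace⟫)
    (hD : ⟪PD trace, flux⟫ = ⟪PD δg, flux⟫) :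
    ⟪trace, flux⟫ = ⟪PD δg, flux⟫ + ⟪PN δG, trace⟫ := by
  have hDflux : ⟪PD flux, trace⟫ = ⟪PD δg, flux⟫ := by
    rw [hPDsym, real_inner_comm, hD]
  rw [real_inner_comm, hsplit, hI, hN, hDflux]
  ring

theorem energy_identity_of_error_equations (dv : Z →ₗ[ℝ] W) (gr : W →ₗ[ℝ] Z)
    (nt : Z →ₗ[ℝ] B) (tr : W →ₗ[ℝ] B)
    (hibp : ∀ (ψ : Z) (w : W), ⟪gr w, ψ⟫ + ⟪w, dv ψ⟫ = ⟪tr w, nt ψ⟫)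
    (τ : ℝ) {εσ Iσ : Z} {εV : W} {εVhat εσhat : B}
    (hflux : εσhat = nt εσ + τ • (tr εV - εVhat))
    (e1 : ⟪εσ, εσ⟫ - ⟪εV, dv εσ⟫ + ⟪εVhat, nt εσ⟫ = -⟪Iσ, εσ⟫)
    (e2 : ⟪εσ, gr εV⟫ - ⟪εσhat, tr εV⟫ = 0) :
    ‖εσ‖ ^ 2 + τ * ‖tr εV - εVhat‖ ^ 2 + ⟪εVhat, εσhat⟫ = -⟪Iσ, εσ⟫ := by
  set e := tr εV - εVhat
  have hdiv : ⟪εV, dv εσ⟫ = ⟪tr εV, nt εσ⟫ - ⟪εσ, gr εV⟫ := by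
    rw [← hibp, real_inner_comm εσ]
    ring
  have hgr : ⟪εσ, gr εV⟫ = ⟪εσhat, tr εV⟫ := sub_eq_zero.mp e2
  have hnt : ⟪e, nt εσ⟫ = ⟪e, εσhat⟫ - τ * ‖e‖ ^ 2 := by
    rw [hflux, inner_add_right, real_inner_smul_right, real_inner_self_eq_norm_sq]
    ring
  calc ‖εσ‖ ^ 2 + τ * ‖e‖ ^ 2 + ⟪εVhat, εσhat⟫
      = ⟪εσ, εσ⟫ - ⟪e, nt εσ⟫ + ⟪εσhat, tr εV⟫ := by
        rw [hnt, real_inner_self_eq_norm_sq, inner_sub_left, real_inner_comm εσhat,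
          real_inner_comm (tr εV) εσhat]
        ring
    _ = -⟪Iσ, εσ⟫ := by
        rw [← e1, hdiv, hgr, inner_sub_left]
        ring

end

/-- `Z`, `W`, `B` are the discrete tensor, vector and face spaces, `dv`/`gr` the
divergence/gradient, `nt` the normal trace `ψ ↦ ψ n`, `tr` the trace `w ↦ w|_faces`, and
`PI`, `PN`, `PD` the restrictions to interior faces, `Γ_N` and `Γ_D`. -/
theorem stmt15_general {Z W B : Type*}
    [NormedAddCommGroup Z] [InnerProductSpace ℝ Z]
    [NormedAddCommGroup W] [InnerProductSpace ℝ W]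
    [NormedAddCommGroup B] [InnerProductSpace ℝ B]
    (dv : Z →ₗ[ℝ] W) (gr : W →ₗ[ℝ] Z) (nt : Z →ₗ[ℝ] B) (tr : W →ₗ[ℝ] B)
    (PI PN PD : B →ₗ[ℝ] B)
    (hsplit : ∀ u v : B, (inner ℝ u v : ℝ)
        = (inner ℝ (PI u) v : ℝ) + (inner ℝ (PN u) v : ℝ) + (inner ℝ (PD u) v : ℝ))
    (hPDsym : ∀ u v : B, (inner ℝ (PD u) v : ℝ) = (inner ℝ u (PD v) : ℝ))
    (hibp : ∀ (ψ : Z) (w : W),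
        (inner ℝ (gr w) ψ : ℝ) + (inner ℝ w (dv ψ) : ℝ) = (inner ℝ (tr w) (nt ψ) : ℝ))
    (τ : ℝ)
    (εσ Iσ : Z) (εV : W) (εVhat δG δg εσhat : B)
    (hflux : εσhat = nt εσ + τ • (tr εV - εVhat))
    (e1 : ∀ ψ : Z, (inner ℝ εσ ψ : ℝ) - (inner ℝ εV (dv ψ) : ℝ) + (inner ℝ εVhat (nt ψ) : ℝ)
        = -(inner ℝ Iσ ψ : ℝ))
    (e2 : ∀ w : W, (inner ℝ εσ (gr w) : ℝ) - (inner ℝ εσhat (tr w) : ℝ) = 0)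
    (e3 : ∀ μ : B, (inner ℝ (PI εσhat) μ : ℝ) = 0)
    (e4 : ∀ μ : B, (inner ℝ (PN εσhat) μ : ℝ) = (inner ℝ (PN δG) μ : ℝ))
    (e5 : ∀ μ : B, (inner ℝ (PD εVhat) μ : ℝ) = (inner ℝ (PD δg) μ : ℝ)) :
    ‖εσ‖^2 + τ * ‖tr εV - εVhat‖^2
      + (inner ℝ (PD δg) εσhat : ℝ) + (inner ℝ (PN δG) εVhat : ℝ)
      = -(inner ℝ Iσ εσ : ℝ) := by
  have hvolume := energy_identity_of_error_equations dv gr nt tr hibp τ hflux (e1 εσ) (e2 εV)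
  have hfaces := inner_eq_of_face_conditions PI PN PD hsplit hPDsym
    (e3 εVhat) (e4 εVhat) (e5 εσhat)
  rw [hfaces] at hvolume
  linarith

/-- Abstract energy identity for the HDG deformation error equations (Lemma 5.3):
testing the discrete error equations with `ψ = ε_σ`, `w = ε_V` and integrating by
parts yields
`‖ε_σ‖² + τ‖ε_V − ε_V̂‖² + ⟨δg, ε_σ̂ n⟩_{Γ_D} + ⟨δG, ε_V̂⟩_{Γ_N} = −(I_σ, ε_σ)`.
Here `Z`, `W`, `B` are the (finite-dimensional, discrete) tensor, vector and face
spaces, `dv`/`gr` are the divergence/gradient, `nt` the normal trace `ψ ↦ ψ n`,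
`tr` the trace `w ↦ w|_faces`, and `PI`, `PN`, `PD` the (self-adjoint) restrictions
to interior faces, `Γ_N` and `Γ_D`, which decompose the face inner product. -/
theorem stmt15 {Z W B : Type*}
    [NormedAddCommGroup Z] [InnerProductSpace ℝ Z]
    [NormedAddCommGroup W] [InnerProductSpace ℝ W]
    [NormedAddCommGroup B] [InnerProductSpace ℝ B]
    (dv : Z →ₗ[ℝ] W) (gr : W →ₗ[ℝ] Z) (nt : Z →ₗ[ℝ] B) (tr : W →ₗ[ℝ] B)
    (PI PN PD : B →ₗ[ℝ] B)
    (hsplit : ∀ u v : B, (inner ℝ u v : ℝ)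
        = (inner ℝ (PI u) v : ℝ) + (inner ℝ (PN u) v : ℝ) + (inner ℝ (PD u) v : ℝ))
    (hPIsym : ∀ u v : B, (inner ℝ (PI u) v : ℝ) = (inner ℝ u (PI v) : ℝ))
    (hPNsym : ∀ u v : B, (inner ℝ (PN u) v : ℝ) = (inner ℝ u (PN v) : ℝ))
    (hPDsym : ∀ u v : B, (inner ℝ (PD u) v : ℝ) = (inner ℝ u (PD v) : ℝ))
    (hibp : ∀ (ψ : Z) (w : W),
        (inner ℝ (gr w) ψ : ℝ) + (inner ℝ w (dv ψ) : ℝ) = (inner ℝ (tr w) (nt ψ) : ℝ))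
    (τ : ℝ) (hτ : 0 < τ)
    (εσ Iσ : Z) (εV : W) (εVhat δG δg εσhat : B)
    (hflux : εσhat = nt εσ + τ • (tr εV - εVhat))
    (e1 : ∀ ψ : Z, (inner ℝ εσ ψ : ℝ) - (inner ℝ εV (dv ψ) : ℝ) + (inner ℝ εVhat (nt ψ) : ℝ)
        = -(inner ℝ Iσ ψ : ℝ))
    (e2 : ∀ w : W, (inner ℝ εσ (gr w) : ℝ) - (inner ℝ εσhat (tr w) : ℝ) = 0)
    (e3 : ∀ μ : B, (inner ℝ (PI εσhat) μ : ℝ) = 0)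
    (e4 : ∀ μ : B, (inner ℝ (PN εσhat) μ : ℝ) = (inner ℝ (PN δG) μ : ℝ))
    (e5 : ∀ μ : B, (inner ℝ (PD εVhat) μ : ℝ) = (inner ℝ (PD δg) μ : ℝ)) :
    ‖εσ‖^2 + τ * ‖tr εV - εVhat‖^2
      + (inner ℝ (PD δg) εσhat : ℝ) + (inner ℝ (PN δG) εVhat : ℝ)
      = -(inner ℝ Iσ εσ : ℝ) :=
  stmt15_general dv gr nt tr PI PN PD hsplit hPDsym hibp τ εσ Iσ εV εVhat δG δg εσhat hflux e1 e2 e3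
    e4 e5
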